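/- arXiv:1811.03503 — 4 statements merged into one kernel-verified Lean document; each statement's English description precedes it below -/
import Mathlib

section
/- (Preservation of acyclicity.) If π is acyclic in (s, h), s(root π) = s'(root π), and the footprint of π in (s,h) equals the footprint of π in (s',h') (as partial maps), then for every prefix π' ≼ π the address of π' is the same in both states, and π is acyclic in (s', h'). -/
/-- Variables. -/
abbrev Var := ℕ
/-- Fld names. -/
abbrev Fld := ℕ
/-- Object locations. -/
abbrev Loc := ℕ
/-- Addresses in the field-splitting style. -/
abbrev Addr := Loc × Fld
/-- Stacks (stores). -/
abbrev Stack := Var → Loc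
/-- Partial heaps. -/
abbrev Heap := Addr → Option Loc

/-- Follow a list of fields starting from a given address. -/
def lvalAux (h : Heap) : Addr → List Fld → Option Addr
  | a, [] => some a
  | a, f :: fs => (h a).bind fun ℓ => lvalAux h (ℓ, f) fs

/-- The address `⟨x.fs⟩_{s,h}` of the access path `x.fs`
    (`none` if undefined, and paths must have a nonempty field list). -/
def lval (s : Stack) (h : Heap) (x : Var) : List Fld → Option Addr
  | [] => none
  | f :: fs => lvalAux h (s x, f) fs

/-- Domain of a partial map. -/
def pdom {β : Type} (m : Addr → Option β) : Set Addr := {a | (m a).isSome}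

/-- Domain of a heap. -/
def hdom (h : Heap) : Set Addr := {a | (h a).isSome}

/-- The locations underlying a set of addresses. -/
def locs (A : Set Addr) : Set Loc := Prod.fst '' A

/-- The set of addresses of all (nonempty) prefixes of the path `x.fs`:
    the domain of its footprint. -/
def footDom (s : Stack) (h : Heap) (x : Var) (fs : List Fld) : Set Addr :=
  {a | ∃ gs : List Fld, gs ≠ [] ∧ gs <+: fs ∧ lval s h x gs = some a}

open Classical in
/-- The footprint `h⟨s, x.fs⟩` of the path `x.fs`: the partial map defined exactly
    on the addresses of prefixes of the path, mapping `⟨π'⟩` to `h ⟨π'⟩`. -/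
noncomputable def footprint (s : Stack) (h : Heap) (x : Var) (fs : List Fld) :
    Addr → Option (Option Loc) :=
  fun a => if a ∈ footDom s h x fs then some (h a) else none

/-- Acyclicity of the path `x.fs` in state `(s, h)`. -/
def Acyclic (s : Stack) (h : Heap) (x : Var) (fs : List Fld) : Prop :=
  (lval s h x fs).isSome ∧
  ∀ (gs' gs : List Fld) (a a' : Addr), gs' ≠ [] → gs' <+: gs → gs <+: fs →
    lval s h x gs = some a → lval s h x gs' = some a' → h a ≠ some a'.1

/-- Disconnectedness of the path `x.fs` in state `(s, h)`. -/
def Disconnected (s : Stack) (h : Heap) (x : Var) (fs : List Fld) : Prop :=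
  (lval s h x fs).isSome ∧
  (∀ y, y ≠ x → s y ∉ locs (footDom s h x fs)) ∧
  (∀ a ℓ, h a = some ℓ → ℓ ∈ locs (footDom s h x fs) → a ∈ footDom s h x fs)

/-- The path `x.fs` is preserved from `(s, h)` to `(s', h')`. -/
def Preserved (x : Var) (fs : List Fld) (s : Stack) (h : Heap)
    (s' : Stack) (h' : Heap) : Prop :=
  Disconnected s h x fs ∧ Acyclic s h x fs ∧
  Disconnected s' h' x fs ∧ Acyclic s' h' x fs ∧
  s x = s' x ∧
  footDom s h x fs = footDom s' h' x fs ∧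
  (∀ a ∈ footDom s h x fs, lval s h x fs ≠ some a → h a = h' a)

/-- Well-behavedness of a state. -/
def WellBehaved (s : Stack) (h : Heap) : Prop :=
  (∀ y, s y ∈ locs (hdom h)) ∧ (∀ a ℓ, h a = some ℓ → ℓ ∈ locs (hdom h))

theorem lvalAux_append (h : Heap) (a : Addr) (gs : List Fld) (f : Fld) :
    lvalAux h a (gs ++ [f]) =
      (lvalAux h a gs).bind fun a' => (h a').bind fun ℓ => some (ℓ, f) := by
  induction gs generalizing a with
  | nil => simp [lvalAux]
  | cons g gs ih =>
    simp only [List.cons_append, lvalAux]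
    cases h a with
    | none => simp
    | some ℓ => simp [ih]

theorem lval_snoc (s : Stack) (h : Heap) (x : Var) (g : Fld) (gs : List Fld) (f : Fld) :
    lval s h x ((g :: gs) ++ [f]) =
      (lval s h x (g :: gs)).bind fun a' => (h a').bind fun ℓ => some (ℓ, f) := by
  simp only [List.cons_append, lval]
  exact lvalAux_append h (s x, g) gs f

/-- (Preservation of acyclicity.) If `π = x.fs` is acyclic in `(s, h)`,
the root values agree, and the footprints of `π` in the two states coincide as partial
maps, then every prefix of `π` has the same address in both states, and `π` is acyclic
in `(s', h')`. -/
theorem acyclic_preserved (s s' : Stack) (h h' : Heap) (x : Var) (fs : List Fld)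
    (hac : Acyclic s h x fs) (hroot : s x = s' x)
    (hfp : footprint s h x fs = footprint s' h' x fs) :
    (∀ gs : List Fld, gs ≠ [] → gs <+: fs → lval s h x gs = lval s' h' x gs) ∧
    Acyclic s' h' x fs := by
  have key : ∀ a ∈ footDom s h x fs, a ∈ footDom s' h' x fs ∧ h a = h' a := by
    intro a ha
    have := congrFun hfp a
    simp only [footprint, if_pos ha] at this
    by_cases ha' : a ∈ footDom s' h' x fs
    · rw [if_pos ha'] at this
      exact ⟨ha', Option.some.inj this⟩
    · rw [if_neg ha'] at this
      exact absurd this (by simp)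
  have main : ∀ gs : List Fld, gs ≠ [] → gs <+: fs → lval s h x gs = lval s' h' x gs := by
    intro gs
    induction gs using List.reverseRecOn with
    | nil => intro hne; exact absurd rfl hne
    | append_singleton bs f ih =>
      intro _ hpre
      cases bs with
      | nil => simp [lval, lvalAux, hroot]
      | cons g bs' =>
        have hpre' : (g :: bs') <+: fs :=
          List.IsPrefix.trans (List.prefix_append _ _) hpre
        have ih' := ih (by simp) hpre'
        rw [lval_snoc, lval_snoc, ← ih']
        cases e : lval s h x (g :: bs') with
        | none => simp
        | some a =>
          have ha : a ∈ footDom s h x fs := ⟨g :: bs', by simp, hpre', e⟩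
          simp [(key a ha).2]
  refine ⟨main, ?_, ?_⟩
  · have hfsne : fs ≠ [] := by
      intro e
      subst e
      simp [lval, Acyclic] at hac
    rw [← main fs hfsne List.prefix_rfl]
    exact hac.1
  · intro gs' gs a a' hne hp1 hp2 hla hla'
    have hgsne : gs ≠ [] := by
      intro e; subst e
      exact hne (List.prefix_nil.mp hp1)
    have e1 : lval s h x gs = some a := by rw [main gs hgsne hp2]; exact hla
    have e2 : lval s h x gs' = some a' := by
      rw [main gs' hne (hp1.trans hp2)]; exact hla'
    have hd := hac.2 gs' gs a a' hne hp1 hp2 e1 e2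
    have ha : a ∈ footDom s h x fs := ⟨gs, hgsne, hp2, e1⟩
    rw [← (key a ha).2]
    exact hd
end

section
/- (Disconnectedness transfers across threads.) Let π₁ = x.fs and π₂ = y.fs with s₁(x) = s₂(y), and heaps h, h' with dom(footprint of π₂ in (s₂,h)) = dom(footprint of π₂ in (s₂,h')). If π₁ is disconnected in (s₁, h') and π₂ is disconnected in (s₂, h), then π₂ is disconnected in (s₂, h'). -/
lemma lval_root_eq (s₁ s₂ : Stack) (h : Heap) (x y : Var) (hroot : s₁ x = s₂ y)
    (gs : List Fld) : lval s₁ h x gs = lval s₂ h y gs := by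
  cases gs with
  | nil => rfl
  | cons f fs => simp [lval, hroot]

lemma footDom_root_eq (s₁ s₂ : Stack) (h : Heap) (x y : Var) (hroot : s₁ x = s₂ y)
    (fs : List Fld) : footDom s₁ h x fs = footDom s₂ h y fs := by
  ext a
  simp only [footDom, Set.mem_setOf_eq]
  constructor <;> rintro ⟨gs, h1, h2, h3⟩ <;> exact ⟨gs, h1, h2, by
    rw [lval_root_eq s₁ s₂ h x y hroot] at * <;> assumption⟩

/-- (Disconnectedness transfers across threads.) Let `π₁ = x.fs` and
`π₂ = y.fs` with `s₁ x = s₂ y`, and heaps `h, h'` such that the footprint domains of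
`π₂` in `(s₂,h)` and `(s₂,h')` agree. If `π₁` is disconnected in `(s₁, h')` and `π₂` is
disconnected in `(s₂, h)`, then `π₂` is disconnected in `(s₂, h')`. -/
theorem disconnected_across_threads (s₁ s₂ : Stack) (h h' : Heap) (x y : Var)
    (fs : List Fld) (hroot : s₁ x = s₂ y)
    (hfd : footDom s₂ h y fs = footDom s₂ h' y fs)
    (h1 : Disconnected s₁ h' x fs) (h2 : Disconnected s₂ h y fs) :
    Disconnected s₂ h' y fs := by
  have hfd' : footDom s₁ h' x fs = footDom s₂ h' y fs :=
    footDom_root_eq s₁ s₂ h' x y hroot fs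
  refine ⟨?_, ?_, ?_⟩
  · rw [← lval_root_eq s₁ s₂ h' x y hroot]; exact h1.1
  · intro z hz
    rw [← hfd]
    exact h2.2.1 z hz
  · intro a ℓ ha hℓ
    rw [← hfd'] at hℓ ⊢
    exact h1.2.2 a ℓ ha hℓ
end

section
/- (Existence of a racy initial state.) Given two paths π₁ = x.fs and π₂ = y.fs with the same nonempty field sequence fs (over an infinite set of locations and with at least the fields of fs available), there exists a well-behaved state consisting of stacks s₁, s₂ and a heap h such that: the footprints of π₁ in (s₁,h) and π₂ in (s₂,h) coincide; the addresses of π₁ and π₂ coincide; and πᵢ is acyclic and disconnected in (sᵢ, h) for i ∈ {1,2}. -/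
/-- The racy heap: location `j` (for `1 ≤ j < n`) chains along field `fs[j-1]`
to `j+1`; everything else points to the sink `0`. -/
def rheap (fs : List Fld) : Heap :=
  fun a => some (if 1 ≤ a.1 ∧ a.1 < fs.length ∧ a.2 = fs.getD (a.1 - 1) 0
                 then a.1 + 1 else 0)

/-- The racy stack for variable `x`. -/
def rstack (x : Var) : Stack := fun v => if v = x then 1 else 0

lemma rchain (fs : List Fld) :
    ∀ (d j : ℕ), 1 ≤ j → j + d ≤ fs.length →
      lvalAux (rheap fs) (j, fs.getD (j - 1) 0) ((fs.take (j + d)).drop j) =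
        some (j + d, fs.getD (j + d - 1) 0) := by
  intro d
  induction d with
  | zero =>
      intro j hj hle
      rw [Nat.add_zero]
      rw [List.drop_eq_nil_of_le (List.length_take_le _ _), lvalAux]
  | succ d ih =>
      intro j hj hle
      have hjlen : j < fs.length := by omega
      have hjt : j < (fs.take (j + (d+1))).length := by
        simp [List.length_take]; omega
      have hdrop : (fs.take (j + (d+1))).drop j =
          (fs.take (j + (d+1)))[j] :: (fs.take (j + (d+1))).drop (j+1) :=
        List.drop_eq_getElem_cons hjt
      have hget : (fs.take (j + (d+1)))[j]'hjt = fs[j]'hjlen := by simp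
      rw [hdrop, hget]
      have hheap : rheap fs (j, fs.getD (j - 1) 0) = some (j + 1) := by
        simp [rheap, hj, hjlen]
      rw [lvalAux, hheap, Option.bind_some]
      have hfld : fs[j]'hjlen = fs.getD ((j+1) - 1) 0 := by
        simp [List.getD_eq_getElem?_getD, List.getElem?_eq_getElem hjlen]
      have harith : j + (d + 1) = (j + 1) + d := by omega
      rw [hfld, harith]
      exact ih (j+1) (by omega) (by omega)

lemma rlval (fs : List Fld) (x : Var) (gs : List Fld) (hne : gs ≠ [])
    (hpre : gs <+: fs) :
    lval (rstack x) (rheap fs) x gs =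
      some (gs.length, fs.getD (gs.length - 1) 0) := by
  obtain ⟨g, gs', rfl⟩ := List.exists_cons_of_ne_nil hne
  obtain ⟨t, rfl⟩ := hpre
  show lvalAux (rheap (g :: gs' ++ t)) (rstack x x, g) gs' = _
  have hsx : rstack x x = 1 := by simp [rstack]
  have h2 : (((g :: (gs' ++ t))).take (1 + gs'.length)).drop 1 = gs' := by
    rw [Nat.add_comm]
    simp [List.take_append]
  have := rchain (g :: (gs' ++ t)) gs'.length 1 le_rfl
      (by simp; omega)
  rw [h2] at this
  have hg : (g :: (gs' ++ t)).getD (1 - 1) 0 = g := by simp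
  rw [hg] at this
  rw [hsx]
  simp only [List.cons_append] at this ⊢
  convert this using 2 <;> simp [Nat.add_comm]

lemma rfootDom (fs : List Fld) (x : Var) (a : Addr) :
    a ∈ footDom (rstack x) (rheap fs) x fs ↔
      ∃ k, 1 ≤ k ∧ k ≤ fs.length ∧ a = (k, fs.getD (k - 1) 0) := by
  constructor
  · rintro ⟨gs, hne, hpre, hlv⟩
    refine ⟨gs.length, ?_, hpre.length_le, ?_⟩
    · cases gs with
      | nil => exact absurd rfl hne
      | cons _ _ => simp
    · rw [rlval fs x gs hne hpre] at hlv
      exact (Option.some_injective _ hlv).symm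
  · rintro ⟨k, hk1, hkn, rfl⟩
    have hne : fs.take k ≠ [] := by
      intro h
      rcases List.take_eq_nil_iff.mp h with h0 | h0
      · omega
      · subst h0; simp at hkn; omega
    have hlen : (fs.take k).length = k := by
      rw [List.length_take]; omega
    refine ⟨fs.take k, hne, List.take_prefix k fs, ?_⟩
    rw [rlval fs x (fs.take k) hne (List.take_prefix k fs), hlen]

lemma rlocs (fs : List Fld) (x : Var) (ℓ : Loc) :
    ℓ ∈ locs (footDom (rstack x) (rheap fs) x fs) ↔ 1 ≤ ℓ ∧ ℓ ≤ fs.length := by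
  constructor
  · rintro ⟨a, ha, rfl⟩
    obtain ⟨k, hk1, hkn, rfl⟩ := (rfootDom fs x a).mp ha
    exact ⟨hk1, hkn⟩
  · rintro ⟨h1, h2⟩
    exact ⟨(ℓ, fs.getD (ℓ - 1) 0), (rfootDom fs x _).mpr ⟨ℓ, h1, h2, rfl⟩, rfl⟩

lemma racyclic (fs : List Fld) (hfs : fs ≠ []) (x : Var) :
    Acyclic (rstack x) (rheap fs) x fs := by
  constructor
  · rw [rlval fs x fs hfs (List.prefix_refl fs)]; simp
  · intro gs' gs a a' hne' hpre' hpre hlv hlv'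
    have hnegs : gs ≠ [] := by
      intro h; subst h; exact hne' (List.prefix_nil.mp hpre')
    rw [rlval fs x gs hnegs hpre] at hlv
    rw [rlval fs x gs' hne' (hpre'.trans hpre)] at hlv'
    obtain rfl := Option.some_injective _ hlv.symm
    obtain rfl := Option.some_injective _ hlv'.symm
    have hk1 : 1 ≤ gs'.length := by
      cases gs' with
      | nil => exact absurd rfl hne'
      | cons _ _ => simp
    have hle : gs'.length ≤ gs.length := hpre'.length_le
    have hlen : gs.length ≤ fs.length := hpre.length_le
    intro h
    simp only [rheap, Option.some.injEq, Prod.fst] at h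
    split_ifs at h
    · have h2 : gs.length + 1 = gs'.length := h
      omega
    · have h2 : 0 = gs'.length := h
      omega

lemma rdisconnected (fs : List Fld) (hfs : fs ≠ []) (x : Var) :
    Disconnected (rstack x) (rheap fs) x fs := by
  refine ⟨?_, ?_, ?_⟩
  · rw [rlval fs x fs hfs (List.prefix_refl fs)]; simp
  · intro v hv hmem
    have hz : rstack x v = 0 := by simp [rstack, hv]
    rw [hz] at hmem
    exact Nat.not_succ_le_zero 0 ((rlocs fs x 0).mp hmem).1
  · intro a ℓ hha hm
    have hℓ := (rlocs fs x ℓ).mp hm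
    simp only [rheap, Option.some.injEq] at hha
    split_ifs at hha with hc
    · refine (rfootDom fs x a).mpr ⟨a.1, hc.1, le_of_lt hc.2.1, ?_⟩
      obtain ⟨a1, a2⟩ := a
      simp only [Prod.mk.injEq]
      exact ⟨trivial, hc.2.2⟩
    · exfalso
      have h2 : (0 : ℕ) = ℓ := hha
      have h3 : 1 ≤ ℓ := hℓ.1
      subst h2
      exact Nat.not_succ_le_zero 0 h3

/-- (Existence of a racy initial state.) Given two paths `π₁ = x.fs`
and `π₂ = y.fs` with the same nonempty field sequence, there exists a well-behaved state
`(s₁, s₂, h)` such that the footprints of `π₁` in `(s₁,h)` and of `π₂` in `(s₂,h)`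
coincide, their addresses coincide (and are defined), and each `πᵢ` is acyclic and
disconnected in `(sᵢ, h)`. -/
theorem exists_racy_initial_state (x y : Var) (fs : List Fld) (hfs : fs ≠ []) :
    ∃ (s₁ s₂ : Stack) (h : Heap),
      (∀ v, s₁ v ∈ locs (hdom h)) ∧ (∀ v, s₂ v ∈ locs (hdom h)) ∧
      (∀ (a : Addr) (ℓ : Loc), h a = some ℓ → ℓ ∈ locs (hdom h)) ∧
      footprint s₁ h x fs = footprint s₂ h y fs ∧
      lval s₁ h x fs = lval s₂ h y fs ∧
      (lval s₁ h x fs).isSome ∧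
      Acyclic s₁ h x fs ∧ Disconnected s₁ h x fs ∧
      Acyclic s₂ h y fs ∧ Disconnected s₂ h y fs := by
  classical
  refine ⟨rstack x, rstack y, rheap fs, ?_, ?_, ?_, ?_, ?_, ?_,
    racyclic fs hfs x, rdisconnected fs hfs x,
    racyclic fs hfs y, rdisconnected fs hfs y⟩
  · intro v
    exact ⟨(rstack x v, 0), by simp [hdom, rheap], rfl⟩
  · intro v
    exact ⟨(rstack y v, 0), by simp [hdom, rheap], rfl⟩
  · intro a ℓ _
    exact ⟨(ℓ, 0), by simp [hdom, rheap], rfl⟩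
  · funext a
    have hfd : footDom (rstack x) (rheap fs) x fs = footDom (rstack y) (rheap fs) y fs := by
      ext b
      rw [show (b ∈ footDom (rstack x) (rheap fs) x fs) = _ from propext (rfootDom fs x b),
        show (b ∈ footDom (rstack y) (rheap fs) y fs) = _ from propext (rfootDom fs y b)]
    simp [footprint, hfd]
  · rw [rlval fs x fs hfs (List.prefix_refl fs), rlval fs y fs hfs (List.prefix_refl fs)]
  · rw [rlval fs x fs hfs (List.prefix_refl fs)]; simp
end

section
/- (Preservation of well-behavedness by simple commands.) If state (s, h) is well-behaved (all stack values and all heap-image locations lie in loc(dom h)), then after executing any of the simple commands x := y, x := π (load, when defined), π := x (store, when defined), or x := new() (allocation of a fresh location ℓ ∉ loc(dom h), with all fields of ℓ initialized to ℓ), the resulting state is again well-behaved. -/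
/-- (Preservation of well-behavedness by simple commands.) If `(s, h)`
is well-behaved, then the state resulting from executing any of the simple commands
`x := y`, `x := π` (load, when defined), `π := x` (store, when defined) or `x := new()`
(allocation of a fresh location, all of whose fields point to itself) is again
well-behaved. -/
theorem wellBehaved_preserved (s : Stack) (h : Heap) (hwb : WellBehaved s h) :
    (∀ x y : Var, WellBehaved (Function.update s x (s y)) h) ∧
    (∀ (x z : Var) (fs : List Fld) (a : Addr) (ℓ : Loc),
        fs ≠ [] → lval s h z fs = some a → h a = some ℓ →
        WellBehaved (Function.update s x ℓ) h) ∧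
    (∀ (x z : Var) (fs : List Fld) (a : Addr),
        fs ≠ [] → lval s h z fs = some a → a ∈ hdom h →
        WellBehaved s (Function.update h a (some (s x)))) ∧
    (∀ (x : Var) (ℓ : Loc), ℓ ∉ locs (hdom h) →
        WellBehaved (Function.update s x ℓ)
          (fun a => if a.1 = ℓ then some ℓ else h a)) := by
  obtain ⟨hs, hh⟩ := hwb
  refine ⟨?_, ?_, ?_, ?_⟩
  · intro x y
    refine ⟨fun v => ?_, hh⟩
    rcases eq_or_ne v x with rfl | hv
    · rw [Function.update_self]; exact hs y
    · rw [Function.update_of_ne hv]; exact hs v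
  · intro x z fs a ℓ _ _ ha
    refine ⟨fun v => ?_, hh⟩
    rcases eq_or_ne v x with rfl | hv
    · rw [Function.update_self]; exact hh a ℓ ha
    · rw [Function.update_of_ne hv]; exact hs v
  · intro x z fs a _ _ hadom
    have hdeq : hdom (Function.update h a (some (s x))) = hdom h := by
      ext b
      rcases eq_or_ne b a with rfl | hb
      · simp only [hdom, Set.mem_setOf_eq, Function.update_self, Option.isSome_some]
        exact iff_of_true trivial hadom
      · simp [hdom, Function.update_of_ne hb]
    refine ⟨fun y => ?_, fun b m hb => ?_⟩
    · rw [hdeq]; exact hs y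
    · rw [hdeq]
      rcases eq_or_ne b a with rfl | hne
      · rw [Function.update_self] at hb
        cases hb; exact hs x
      · rw [Function.update_of_ne hne] at hb; exact hh b m hb
  · intro x ℓ hℓ
    set h' : Heap := fun a => if a.1 = ℓ then some ℓ else h a with hh'
    have hsub : locs (hdom h) ⊆ locs (hdom h') := by
      rintro m ⟨a, ha, rfl⟩
      refine ⟨a, ?_, rfl⟩
      have hne : a.1 ≠ ℓ := fun e => hℓ ⟨a, ha, e⟩
      simpa [hdom, h', hne] using ha
    have hℓin : ℓ ∈ locs (hdom h') := ⟨(ℓ, 0), by simp [hdom, h'], rfl⟩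
    refine ⟨fun y => ?_, fun a m ham => ?_⟩
    · rcases eq_or_ne y x with rfl | hy
      · rw [Function.update_self]; exact hℓin
      · rw [Function.update_of_ne hy]; exact hsub (hs y)
    · by_cases hcase : a.1 = ℓ
      · simp only [h', hcase, if_true] at ham
        cases ham; exact hℓin
      · simp only [h', hcase, if_false] at ham
        exact hsub (hh a m ham)
end
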